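/- There is no guarded recursive specification over TSP whose process graph is bisimilar to the process graph of the always-accepting counter (states ℕ, all accepting, n →a n+1, n+1 →b n, root 0). -/

import Mathlib

/-!
Every reachable state of the specification is a sequential composition `t₁ · ⋯ · tₖ` whose factors
come from a finite set: the identifiers and the subterms of their bodies. A state bisimilar to
counter value `n` is accepting, hence so are all its factors. If its last factor can step, then by
transparency the whole state takes that very step and lands in a successor of a factor, of value
`n ± 1`; otherwise that factor is accepting and deadlocked and can be dropped. So every `n` is at
most one more than the value of some successor of a factor. By guardedness there are finitely many
such successors, each with a single counter value, whereas the `a`-steps reach every `n`.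
-/

structure LTS (S : Type*) (A : Type*) where
  Tr : S → A → S → Prop
  Acc : S → Prop

def IsBisimulation {S A : Type*} (L : LTS S A) (R : S → S → Prop) : Prop :=
  Symmetric R ∧ ∀ s t, R s t →
    (∀ a s', L.Tr s a s' → ∃ t', L.Tr t a t' ∧ R s' t') ∧
    (L.Acc s → L.Acc t)

def Bisimilar {S A : Type*} (L : LTS S A) (s t : S) : Prop :=
  ∃ R, IsBisimulation L R ∧ R s t

/-- TSP process expressions: 0, 1, action prefix, choice, sequential
composition, and identifiers from `V`. -/
inductive Expr (A V : Type) where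
  | zero | one
  | act (a : A) (p : Expr A V)
  | add (p q : Expr A V)
  | seq (p q : Expr A V)
  | var (X : V)

/-- The acceptance predicate ↓ for TSP, relative to a specification Δ. -/
inductive EAcc {A V : Type} (Δ : V → Expr A V) : Expr A V → Prop
  | one : EAcc Δ .one
  | addL {p q} : EAcc Δ p → EAcc Δ (Expr.add p q)
  | addR {p q} : EAcc Δ q → EAcc Δ (Expr.add p q)
  | seq {p q} : EAcc Δ p → EAcc Δ q → EAcc Δ (Expr.seq p q)
  | var {X} : EAcc Δ (Δ X) → EAcc Δ (.var X)

/-- The TSP transition relation (with the transparent rule: if `p↓` and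
`q →a q'` then `p·q →a q'`). -/
inductive EStep {A V : Type} (Δ : V → Expr A V) : Expr A V → A → Expr A V → Prop
  | act {a p} : EStep Δ (.act a p) a p
  | addL {p q a p'} : EStep Δ p a p' → EStep Δ (Expr.add p q) a p'
  | addR {p q a q'} : EStep Δ q a q' → EStep Δ (Expr.add p q) a q'
  | seqL {p q a p'} : EStep Δ p a p' → EStep Δ (Expr.seq p q) a (p'.seq q)
  | seqR {p q a q'} : EAcc Δ p → EStep Δ q a q' → EStep Δ (Expr.seq p q) a q'
  | var {X a p'} : EStep Δ (Δ X) a p' → EStep Δ (.var X) a p'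

def exprLTS {A V : Type} (Δ : V → Expr A V) : LTS (Expr A V) A :=
  ⟨EStep Δ, EAcc Δ⟩

/-- A bisimulation between the states of two labelled transition systems. -/
def IsBisimulation2 {S T A : Type*} (L : LTS S A) (L' : LTS T A)
    (R : S → T → Prop) : Prop :=
  ∀ s t, R s t →
    (∀ a s', L.Tr s a s' → ∃ t', L'.Tr t a t' ∧ R s' t') ∧
    (∀ a t', L'.Tr t a t' → ∃ s', L.Tr s a s' ∧ R s' t') ∧
    (L.Acc s ↔ L'.Acc t)

def Bisimilar2 {S T A : Type*} (L : LTS S A) (L' : LTS T A) (s : S) (t : T) : Prop :=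
  ∃ R, IsBisimulation2 L L' R ∧ R s t
/-- An expression is guarded if every occurrence of an identifier lies within
the scope of an action prefix. -/
inductive EGuarded {A V : Type} : Expr A V → Prop
  | zero : EGuarded .zero
  | one : EGuarded .one
  | act (a : A) (p : Expr A V) : EGuarded (.act a p)
  | add {p q} : EGuarded p → EGuarded q → EGuarded (Expr.add p q)
  | seq {p q} : EGuarded p → EGuarded q → EGuarded (Expr.seq p q)
inductive Lab where
  | a | b

/-- The always-accepting counter: states ℕ, all accepting, `n →a n+1`, `n+1 →b n`. -/
def counter : LTS ℕ Lab :=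
  { Tr := fun m l n => (l = .a ∧ n = m + 1) ∨ (l = .b ∧ m = n + 1)
    Acc := fun _ => True }


namespace Bisimilar2

variable {S T U A : Type*} {L : LTS S A} {L' : LTS T A} {L'' : LTS U A}
  {s : S} {t : T} {u : U}

theorem exists_tr_left (h : Bisimilar2 L L' s t) {a : A} {s' : S} (hs : L.Tr s a s') :
    ∃ t', L'.Tr t a t' ∧ Bisimilar2 L L' s' t' := by
  obtain ⟨R, hR, hst⟩ := h
  obtain ⟨t', ht', hr⟩ := (hR s t hst).1 a s' hs
  exact ⟨t', ht', R, hR, hr⟩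

theorem exists_tr_right (h : Bisimilar2 L L' s t) {a : A} {t' : T} (ht : L'.Tr t a t') :
    ∃ s', L.Tr s a s' ∧ Bisimilar2 L L' s' t' := by
  obtain ⟨R, hR, hst⟩ := h
  obtain ⟨s', hs', hr⟩ := (hR s t hst).2.1 a t' ht
  exact ⟨s', hs', R, hR, hr⟩

theorem acc_iff (h : Bisimilar2 L L' s t) : L.Acc s ↔ L'.Acc t := by
  obtain ⟨R, hR, hst⟩ := h
  exact (hR s t hst).2.2

theorem symm (h : Bisimilar2 L L' s t) : Bisimilar2 L' L t s := by
  obtain ⟨R, hR, hst⟩ := h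
  refine ⟨fun t s => R s t, fun t s hts => ?_, hst⟩
  obtain ⟨forth, back, acc⟩ := hR s t hts
  exact ⟨back, forth, acc.symm⟩

theorem trans (h₁ : Bisimilar2 L L' s t) (h₂ : Bisimilar2 L' L'' t u) :
    Bisimilar2 L L'' s u := by
  refine ⟨fun s u => ∃ t, Bisimilar2 L L' s t ∧ Bisimilar2 L' L'' t u,
    fun s u ⟨t, hst, htu⟩ => ⟨fun a s' hs => ?_, fun a u' hu => ?_, hst.acc_iff.trans htu.acc_iff⟩,
    t, h₁, h₂⟩
  · obtain ⟨t', ht, hst'⟩ := hst.exists_tr_left hs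
    obtain ⟨u', hu, htu'⟩ := htu.exists_tr_left ht
    exact ⟨u', hu, t', hst', htu'⟩
  · obtain ⟨t', ht, htu'⟩ := htu.exists_tr_right hu
    obtain ⟨s', hs, hst'⟩ := hst.exists_tr_right ht
    exact ⟨s', hs, t', hst', htu'⟩

end Bisimilar2

theorem IsBisimulation.isBisimulation2 {S A : Type*} {L : LTS S A} {R : S → S → Prop}
    (hR : IsBisimulation L R) : IsBisimulation2 L L R := by
  intro s t hst
  refine ⟨(hR.2 s t hst).1, fun a t' ht => ?_, ⟨(hR.2 s t hst).2, (hR.2 t s (hR.1 hst)).2⟩⟩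
  obtain ⟨s', hs, hr⟩ := (hR.2 t s (hR.1 hst)).1 a t' ht
  exact ⟨s', hs, hR.1 hr⟩

theorem counter_tr_a (n : ℕ) : counter.Tr n .a (n + 1) :=
  Or.inl ⟨rfl, rfl⟩

theorem counter_tr_b (n : ℕ) : counter.Tr (n + 1) .b n :=
  Or.inr ⟨rfl, rfl⟩

theorem le_succ_of_counter_tr {n m : ℕ} {l : Lab} (h : counter.Tr n l m) : n ≤ m + 1 := by
  rcases h with ⟨-, rfl⟩ | ⟨-, rfl⟩ <;> omega

theorem eq_of_bisimilar2_counter {m n : ℕ} (h : Bisimilar2 counter counter m n) : m = n := by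
  induction m generalizing n with
  | zero =>
    cases n with
    | zero => rfl
    | succ n =>
      obtain ⟨m', hm', -⟩ := h.exists_tr_right (counter_tr_b n)
      rcases hm' with ⟨h, -⟩ | ⟨-, h⟩ <;> cases h
  | succ m ih =>
    obtain ⟨n', hn', h'⟩ := h.exists_tr_left (counter_tr_b m)
    rcases hn' with ⟨h, -⟩ | ⟨-, rfl⟩
    · cases h
    · rw [ih h']

theorem subsingleton_bisimilar2_counter {S : Type*} {L : LTS S Lab} (s : S) :
    {n | Bisimilar2 L counter s n}.Subsingleton :=
  fun _ hm _ hn => eq_of_bisimilar2_counter (hm.symm.trans hn)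

namespace Expr

variable {A V : Type} {Δ : V → Expr A V}

def subterms : Expr A V → List (Expr A V)
  | zero => [zero]
  | one => [one]
  | act a p => act a p :: p.subterms
  | add p q => add p q :: (p.subterms ++ q.subterms)
  | seq p q => seq p q :: (p.subterms ++ q.subterms)
  | var X => [var X]

theorem mem_subterms_self (e : Expr A V) : e ∈ e.subterms := by
  cases e <;> simp [subterms]

theorem subterms_subset_of_mem {s e : Expr A V} (h : s ∈ e.subterms) :
    s.subterms ⊆ e.subterms := by
  induction e with
  | act a p ih =>
    rcases List.mem_cons.1 h with rfl | h
    · exact List.Subset.refl _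
    · exact List.Subset.trans (ih h) (List.subset_cons_self _ _)
  | add p q ihp ihq | seq p q ihp ihq =>
    rcases List.mem_cons.1 h with rfl | h
    · exact List.Subset.refl _
    rcases List.mem_append.1 h with h | h
    · exact List.Subset.trans (ihp h) (List.subset_cons_of_subset _ (List.subset_append_left _ _))
    · exact List.Subset.trans (ihq h) (List.subset_cons_of_subset _ (List.subset_append_right _ _))
  | zero | one | var X =>
    rw [List.mem_singleton.1 h]
    exact List.Subset.refl _

def leaves : Expr A V → Set (Expr A V)
  | seq p q => p.leaves ∪ q.leaves
  | e => {e}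

theorem leaves_subset_subterms (e : Expr A V) : e.leaves ⊆ {s | s ∈ e.subterms} := by
  induction e with
  | seq p q ihp ihq =>
    rintro s (hs | hs)
    · exact List.mem_cons_of_mem _ (List.mem_append_left _ (ihp hs))
    · exact List.mem_cons_of_mem _ (List.mem_append_right _ (ihq hs))
  | _ => rintro s rfl; exact mem_subterms_self _

def lastLeaf : Expr A V → Expr A V
  | seq _ q => q.lastLeaf
  | e => e

theorem lastLeaf_eq_self_or_exists_seq (e : Expr A V) :
    e.lastLeaf = e ∨ ∃ p q : Expr A V, e = p.seq q := by
  cases e <;> simp [lastLeaf]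

theorem lastLeaf_mem_leaves (e : Expr A V) : e.lastLeaf ∈ e.leaves := by
  induction e with
  | seq p q _ ihq => exact Or.inr ihq
  | _ => rfl

theorem eAcc_lastLeaf {e : Expr A V} (h : EAcc Δ e) : EAcc Δ e.lastLeaf := by
  induction e with
  | seq p q _ ihq => cases h with | seq _ hq => exact ihq hq
  | _ => exact h

theorem eStep_of_eStep_lastLeaf {e u : Expr A V} {l : A} (he : EAcc Δ e)
    (h : EStep Δ e.lastLeaf l u) : EStep Δ e l u := by
  induction e with
  | seq p q _ ihq => cases he with | seq hp hq => exact EStep.seqR hp (ihq hq h)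
  | _ => exact h

/-- `seqDropLast p q` is `p · q` with its last factor removed. -/
def seqDropLast (p : Expr A V) : Expr A V → Expr A V
  | seq q r => p.seq (q.seqDropLast r)
  | _ => p

theorem leaves_seqDropLast_subset (p q : Expr A V) :
    (p.seqDropLast q).leaves ⊆ (p.seq q).leaves := by
  induction q generalizing p with
  | seq q r _ ihr => exact Set.union_subset_union_right _ (ihr q)
  | _ => exact Set.subset_union_left

def seqCount : Expr A V → ℕ
  | seq p q => p.seqCount + q.seqCount + 1
  | _ => 0

theorem seqCount_seqDropLast (p q : Expr A V) :
    (p.seqDropLast q).seqCount + 1 = (p.seq q).seqCount := by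
  induction q generalizing p with
  | seq q r _ ihr => have := ihr q; simp only [seqDropLast, seqCount] at this ⊢; omega
  | _ => simp only [seqDropLast, seqCount]

end Expr

section Bisimilarity

variable {A V : Type} {Δ : V → Expr A V}

theorem bisimilar2_seq_of_deadlock {q : Expr A V} (hacc : EAcc Δ q)
    (hdead : ∀ l u, ¬ EStep Δ q l u) (p : Expr A V) :
    Bisimilar2 (exprLTS Δ) (exprLTS Δ) (p.seq q) p := by
  refine ⟨fun x y => x = y.seq q, ?_, rfl⟩
  rintro _ y rfl
  refine ⟨fun l x' hx => ?_, fun l y' hy => ⟨_, EStep.seqL hy, rfl⟩, ?_⟩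
  · cases hx with
    | seqL hy => exact ⟨_, hy, rfl⟩
    | seqR _ hq => exact absurd hq (hdead _ _)
  · exact ⟨fun (.seq hy _) => hy, fun hy => EAcc.seq hy hacc⟩

theorem bisimilar2_seq_seq {q q' : Expr A V}
    (h : Bisimilar2 (exprLTS Δ) (exprLTS Δ) q q') (p : Expr A V) :
    Bisimilar2 (exprLTS Δ) (exprLTS Δ) (p.seq q) (p.seq q') := by
  let R : Expr A V → Expr A V → Prop := fun x y => Bisimilar2 (exprLTS Δ) (exprLTS Δ) x y ∨
    ∃ p q q' : Expr A V, x = p.seq q ∧ y = p.seq q' ∧ Bisimilar2 (exprLTS Δ) (exprLTS Δ) q q'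
  have hR : IsBisimulation (exprLTS Δ) R := by
    refine ⟨?_, fun x y hxy => ?_⟩
    · rintro x y (h | ⟨p, q, q', rfl, rfl, h⟩)
      exacts [Or.inl h.symm, Or.inr ⟨p, q', q, rfl, rfl, h.symm⟩]
    rcases hxy with hxy | ⟨p, q, q', rfl, rfl, h⟩
    · refine ⟨fun l x' hx => ?_, hxy.acc_iff.1⟩
      obtain ⟨y', hy, h'⟩ := hxy.exists_tr_left hx
      exact ⟨y', hy, Or.inl h'⟩
    refine ⟨fun l x' hx => ?_, fun (.seq hp hq) => EAcc.seq hp (h.acc_iff.1 hq)⟩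
    cases hx with
    | seqL hp => exact ⟨_, EStep.seqL hp, Or.inr ⟨_, q, q', rfl, rfl, h⟩⟩
    | seqR hp hq =>
      obtain ⟨u', hu, h'⟩ := h.exists_tr_left hq
      exact ⟨u', EStep.seqR hp hu, Or.inl h'⟩
  exact ⟨R, hR.isBisimulation2, Or.inr ⟨p, q, q', rfl, rfl, h⟩⟩

theorem bisimilar2_seqDropLast {q : Expr A V} (hacc : EAcc Δ q.lastLeaf)
    (hdead : ∀ l u, ¬ EStep Δ q.lastLeaf l u) (p : Expr A V) :
    Bisimilar2 (exprLTS Δ) (exprLTS Δ) (p.seq q) (p.seqDropLast q) := by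
  induction q generalizing p with
  | seq q r _ ihr => exact bisimilar2_seq_seq (ihr hacc hdead q) p
  | _ => exact bisimilar2_seq_of_deadlock hacc hdead p

end Bisimilarity

section Successors

variable {A V : Type} {Δ : V → Expr A V}

def succs (Δ : V → Expr A V) (e : Expr A V) : Set (Expr A V) :=
  {e' | ∃ l, EStep Δ e l e'}

theorem succs_zero : succs Δ .zero = ∅ :=
  Set.eq_empty_of_forall_notMem fun _ ⟨_, h⟩ => nomatch h

theorem succs_one : succs Δ .one = ∅ :=
  Set.eq_empty_of_forall_notMem fun _ ⟨_, h⟩ => nomatch h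

theorem succs_act (a : A) (p : Expr A V) : succs Δ (.act a p) ⊆ {p} := by
  rintro _ ⟨_, ⟨⟩⟩; rfl

theorem succs_add (p q : Expr A V) : succs Δ (.add p q) ⊆ succs Δ p ∪ succs Δ q := by
  rintro _ ⟨l, h⟩
  cases h with
  | addL h => exact Or.inl ⟨l, h⟩
  | addR h => exact Or.inr ⟨l, h⟩

theorem succs_seq (p q : Expr A V) :
    succs Δ (.seq p q) ⊆ (fun p' => p'.seq q) '' succs Δ p ∪ succs Δ q := by
  rintro _ ⟨l, h⟩
  cases h with
  | seqL h => exact Or.inl ⟨_, ⟨l, h⟩, rfl⟩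
  | seqR _ h => exact Or.inr ⟨l, h⟩

theorem succs_var (X : V) : succs Δ (.var X) = succs Δ (Δ X) := by
  ext e'
  exact ⟨fun ⟨l, .var h⟩ => ⟨l, h⟩, fun ⟨l, h⟩ => ⟨l, .var h⟩⟩

theorem EGuarded.finite_succs {e : Expr A V} (h : EGuarded e) : (succs Δ e).Finite := by
  induction h with
  | zero => simp only [succs_zero, Set.finite_empty]
  | one => simp only [succs_one, Set.finite_empty]
  | act a p => exact (Set.finite_singleton p).subset (succs_act a p)
  | add _ _ ihp ihq => exact (ihp.union ihq).subset (succs_add _ _)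
  | seq _ _ ihp ihq => exact ((ihp.image _).union ihq).subset (succs_seq _ _)

theorem finite_succs (hg : ∀ X, EGuarded (Δ X)) (e : Expr A V) : (succs Δ e).Finite := by
  induction e with
  | zero => simp only [succs_zero, Set.finite_empty]
  | one => simp only [succs_one, Set.finite_empty]
  | act a p => exact (Set.finite_singleton p).subset (succs_act a p)
  | add _ _ ihp ihq => exact (ihp.union ihq).subset (succs_add _ _)
  | seq _ _ ihp ihq => exact ((ihp.image _).union ihq).subset (succs_seq _ _)
  | var X => exact succs_var (Δ := Δ) X ▸ (hg X).finite_succs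

end Successors

section Reachability

variable {A V : Type} {Δ : V → Expr A V}

def specSubterms (Δ : V → Expr A V) : Set (Expr A V) :=
  {s | ∃ X, s = .var X ∨ s ∈ (Δ X).subterms}

theorem finite_specSubterms [Finite V] : (specSubterms Δ).Finite := by
  refine (Set.finite_iUnion fun X => ((Δ X).subterms.finite_toSet.insert (.var X))).subset ?_
  rintro s ⟨X, hs⟩
  exact Set.mem_iUnion.2 ⟨X, hs⟩

theorem mem_specSubterms_of_mem_subterms {s t : Expr A V} (hs : s ∈ t.subterms)
    (ht : t ∈ specSubterms Δ) : s ∈ specSubterms Δ := by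
  obtain ⟨X, rfl | ht⟩ := ht
  · exact ⟨X, Or.inl (List.mem_singleton.1 hs)⟩
  · exact ⟨X, Or.inr (Expr.subterms_subset_of_mem ht hs)⟩

theorem leaves_subset_specSubterms_of_mem {t : Expr A V} (ht : t ∈ specSubterms Δ) :
    t.leaves ⊆ specSubterms Δ :=
  fun _ hs => mem_specSubterms_of_mem_subterms (t.leaves_subset_subterms hs) ht

theorem EStep.leaves_subset_specSubterms {e e' : Expr A V} {l : A} (h : EStep Δ e l e')
    (he : e.leaves ⊆ specSubterms Δ) : e'.leaves ⊆ specSubterms Δ := by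
  induction h with
  | @act a p =>
    refine leaves_subset_specSubterms_of_mem
      (mem_specSubterms_of_mem_subterms ?_ (he rfl))
    exact List.mem_cons_of_mem _ p.mem_subterms_self
  | @addL p q _ _ _ ih =>
    refine ih (leaves_subset_specSubterms_of_mem (mem_specSubterms_of_mem_subterms ?_ (he rfl)))
    exact List.mem_cons_of_mem _ (List.mem_append_left _ p.mem_subterms_self)
  | @addR p q _ _ _ ih =>
    refine ih (leaves_subset_specSubterms_of_mem (mem_specSubterms_of_mem_subterms ?_ (he rfl)))
    exact List.mem_cons_of_mem _ (List.mem_append_right _ q.mem_subterms_self)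
  | seqL _ ih => exact Set.union_subset (ih fun _ hs => he (Or.inl hs)) fun _ hs => he (Or.inr hs)
  | seqR _ _ ih => exact ih fun _ hs => he (Or.inr hs)
  | @var X _ _ _ ih =>
    exact ih (leaves_subset_specSubterms_of_mem ⟨X, Or.inr (Δ X).mem_subterms_self⟩)

end Reachability

theorem exists_leaf_eStep_of_bisimilar2_counter {V : Type} {Δ : V → Expr Lab V}
    (e : Expr Lab V) (n : ℕ) (h : Bisimilar2 (exprLTS Δ) counter e n) :
    ∃ t ∈ e.leaves, ∃ l u, EStep Δ t l u ∧ ∃ m, Bisimilar2 (exprLTS Δ) counter u m ∧ n ≤ m + 1 := by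
  have hacc : EAcc Δ e := h.acc_iff.2 trivial
  by_cases hlast : ∃ l u, EStep Δ e.lastLeaf l u
  · obtain ⟨l, u, hu⟩ := hlast
    obtain ⟨m, hm, hum⟩ := h.exists_tr_left (Expr.eStep_of_eStep_lastLeaf hacc hu)
    exact ⟨_, e.lastLeaf_mem_leaves, l, u, hu, m, hum, le_succ_of_counter_tr hm⟩
  push Not at hlast
  rcases e.lastLeaf_eq_self_or_exists_seq with heq | ⟨p, q, rfl⟩
  · obtain ⟨e', he', -⟩ := h.exists_tr_right (counter_tr_a n)
    exact absurd he' (heq ▸ hlast .a e')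
  have hdrop := bisimilar2_seqDropLast (q := q) (Expr.eAcc_lastLeaf (e := p.seq q) hacc) hlast p
  obtain ⟨t, ht, rest⟩ := exists_leaf_eStep_of_bisimilar2_counter _ n (hdrop.symm.trans h)
  exact ⟨t, Expr.leaves_seqDropLast_subset p q ht, rest⟩
termination_by e.seqCount
decreasing_by
  subst_vars
  exact Nat.lt_of_succ_le (Expr.seqCount_seqDropLast p q).le

theorem no_guarded_tsp_spec_for_counter (V : Type) [Finite V]
    (Δ : V → Expr Lab V) (hg : ∀ X, EGuarded (Δ X)) (X₀ : V) :
    ¬ Bisimilar2 (exprLTS Δ) counter (.var X₀) 0 := by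
  intro h₀
  have reach : ∀ n, ∃ e, e.leaves ⊆ specSubterms Δ ∧ Bisimilar2 (exprLTS Δ) counter e n := by
    intro n
    induction n with
    | zero => exact ⟨_, by rintro _ rfl; exact ⟨X₀, Or.inl rfl⟩, h₀⟩
    | succ n ih =>
      obtain ⟨e, he, hen⟩ := ih
      obtain ⟨e', hstep, hen'⟩ := hen.exists_tr_right (counter_tr_a n)
      exact ⟨e', hstep.leaves_subset_specSubterms he, hen'⟩
  have hvalues : (⋃ u ∈ ⋃ t ∈ specSubterms Δ, succs Δ t,
      {m | Bisimilar2 (exprLTS Δ) counter u m}).Finite :=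
    (finite_specSubterms.biUnion fun t _ => finite_succs hg t).biUnion
      fun u _ => (subsingleton_bisimilar2_counter u).finite
  obtain ⟨N, hN⟩ := hvalues.bddAbove
  obtain ⟨e, he, hen⟩ := reach (N + 2)
  obtain ⟨t, ht, l, u, hu, m, hum, hle⟩ := exists_leaf_eStep_of_bisimilar2_counter e _ hen
  have hm : m ≤ N := hN (Set.mem_biUnion (Set.mem_biUnion (he ht) ⟨l, hu⟩) hum)
  omega
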